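/- Any sequence (u_n) in the Nehari manifold M_{λ,k} with J_{λ,k}(u_n) → c_{λ,k} is bounded in W^{1,p(x)}(R^N). -/

import Mathlib

open MeasureTheory Filter Topology

noncomputable section

/-- Euclidean space `ℝ^N`. -/
abbrev RN (N : ℕ) : Type := EuclideanSpace ℝ (Fin N)

/-- The point of `ℝ^N` with integer coordinates `z`. -/
def intPt {N : ℕ} (z : Fin N → ℤ) : RN N :=
  (EuclideanSpace.equiv (Fin N) ℝ).symm fun i => (z i : ℝ)

/-- `ℤ^N`-periodicity of a function on `ℝ^N`. -/
def ZPeriodic {N : ℕ} (h : RN N → ℝ) : Prop :=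
  ∀ (x : RN N) (z : Fin N → ℤ), h (x + intPt z) = h x

/-- The modular `ρ₁` of the variable exponent Sobolev space `W^{1,p(x)}(ℝ^N)`. -/
def rho1 {N : ℕ} (p : RN N → ℝ) (u : RN N → ℝ) : ℝ :=
  ∫ x, (‖gradient u x‖ ^ p x + |u x| ^ p x)

/-- Membership in the variable exponent Sobolev space `W^{1,p(x)}(ℝ^N)`. -/
def memW {N : ℕ} (p : RN N → ℝ) (u : RN N → ℝ) : Prop :=
  Measurable u ∧ Integrable (fun x => ‖gradient u x‖ ^ p x + |u x| ^ p x) (volume : Measure (RN N))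

/-- The Luxemburg-type norm of `W^{1,p(x)}(ℝ^N)`. -/
def WluxNorm {N : ℕ} (p : RN N → ℝ) (u : RN N → ℝ) : ℝ :=
  sInf {t : ℝ | 0 < t ∧ (∫ x, ((‖gradient u x‖ ^ p x + |u x| ^ p x) / t ^ p x)) ≤ 1}

/-- The energy functional `J_{λ,k}` associated with problem `(P_{λ,k})`. -/
def Jlk {N : ℕ} (p q r f g : RN N → ℝ) (lam : ℝ) (k : ℕ) (u : RN N → ℝ) : ℝ :=
  (∫ x, (1 / p x) * (‖gradient u x‖ ^ p x + |u x| ^ p x))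
    - lam * (∫ x, (g ((k : ℝ)⁻¹ • x) / q x) * |u x| ^ q x)
    - ∫ x, (f ((k : ℝ)⁻¹ • x) / r x) * |u x| ^ r x

/-- The Gâteaux derivative `J'_{λ,k}(u)v`. -/
def dJlk {N : ℕ} (p q r f g : RN N → ℝ) (lam : ℝ) (k : ℕ) (u v : RN N → ℝ) : ℝ :=
  (∫ x, (‖gradient u x‖ ^ (p x - 2) * (inner ℝ (gradient u x) (gradient v x) : ℝ)
      + |u x| ^ (p x - 2) * u x * v x))
    - lam * (∫ x, g ((k : ℝ)⁻¹ • x) * |u x| ^ (q x - 2) * u x * v x)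
    - ∫ x, f ((k : ℝ)⁻¹ • x) * |u x| ^ (r x - 2) * u x * v x

/-- The derivative `E'_{λ,k}(u)v` of the map `E_{λ,k}(u) = J'_{λ,k}(u)u`. -/
def dElk {N : ℕ} (p q r f g : RN N → ℝ) (lam : ℝ) (k : ℕ) (u v : RN N → ℝ) : ℝ :=
  (∫ x, p x * (‖gradient u x‖ ^ (p x - 2) * (inner ℝ (gradient u x) (gradient v x) : ℝ)
      + |u x| ^ (p x - 2) * u x * v x))
    - lam * (∫ x, q x * (g ((k : ℝ)⁻¹ • x) * |u x| ^ (q x - 2) * u x * v x))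
    - ∫ x, r x * (f ((k : ℝ)⁻¹ • x) * |u x| ^ (r x - 2) * u x * v x)

/-- The Nehari manifold `M_{λ,k}`. -/
def nehari {N : ℕ} (p q r f g : RN N → ℝ) (lam : ℝ) (k : ℕ) (u : RN N → ℝ) : Prop :=
  memW p u ∧ ¬ (u =ᵐ[(volume : Measure (RN N))] 0) ∧ dJlk p q r f g lam k u u = 0

/-- The Nehari level `c_{λ,k}`. -/
def clk {N : ℕ} (p q r f g : RN N → ℝ) (lam : ℝ) (k : ℕ) : ℝ :=
  sInf ((Jlk p q r f g lam k) '' {u | nehari p q r f g lam k u})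

/-- Limit-type functional with weight `w` in front of the `r(x)`-term. -/
def Jw {N : ℕ} (p r w : RN N → ℝ) (u : RN N → ℝ) : ℝ :=
  (∫ x, (1 / p x) * (‖gradient u x‖ ^ p x + |u x| ^ p x))
    - ∫ x, (w x / r x) * |u x| ^ r x

/-- Derivative of the limit-type functional. -/
def dJw {N : ℕ} (p r w : RN N → ℝ) (u v : RN N → ℝ) : ℝ :=
  (∫ x, (‖gradient u x‖ ^ (p x - 2) * (inner ℝ (gradient u x) (gradient v x) : ℝ)
      + |u x| ^ (p x - 2) * u x * v x))
    - ∫ x, w x * |u x| ^ (r x - 2) * u x * v x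

/-- Nehari manifold of the limit-type functional. -/
def nehariW {N : ℕ} (p r w : RN N → ℝ) (u : RN N → ℝ) : Prop :=
  memW p u ∧ ¬ (u =ᵐ[(volume : Measure (RN N))] 0) ∧ dJw p r w u u = 0

/-- Nehari level of the limit-type functional. -/
def cW {N : ℕ} (p r w : RN N → ℝ) : ℝ :=
  sInf ((Jw p r w) '' {u | nehariW p r w u})

/-! Nehari functions satisfy `ρ₁(u) = λ ∫ g |u|^q + ∫ f |u|^r`, and `1/p ≥ 1/p⁺`, `1/q, 1/r ≤ 1/q⁻`
turn this into `J(u) ≥ (1/p⁺ - 1/q⁻) ρ₁(u)`. Along a minimizing sequence `J` is bounded, hence so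
is `ρ₁`, and the Luxemburg norm is at most `max 1 ρ₁` because `p ≥ 1`. -/

lemma Real.rpow_sub_two_mul_self_mul_self {a : ℝ} (ha : 0 ≤ a) {c : ℝ} (hc : c ≠ 0) :
    a ^ (c - 2) * a * a = a ^ c := by
  have h := Real.rpow_add_intCast' ha (y := c - 2) (n := 2) (by simpa using hc)
  rw [mul_assoc, ← sq]
  simpa using h.symm

lemma Real.abs_rpow_sub_two_mul_self_mul_self (a : ℝ) {c : ℝ} (hc : c ≠ 0) :
    |a| ^ (c - 2) * a * a = |a| ^ c := by
  rw [mul_assoc, ← abs_mul_abs_self, ← mul_assoc]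
  exact Real.rpow_sub_two_mul_self_mul_self (abs_nonneg a) hc

namespace MeasureTheory

variable {α : Type*} [MeasurableSpace α] {μ : Measure α}

lemma inv_mul_integral_le_integral_one_div_mul {e F : α → ℝ} {M : ℝ} (he : AEMeasurable e μ)
    (hbound : ∀ᵐ x ∂μ, 1 ≤ e x ∧ e x ≤ M) (hF : Integrable F μ) (hF0 : ∀ x, 0 ≤ F x) :
    M⁻¹ * ∫ x, F x ∂μ ≤ ∫ x, 1 / e x * F x ∂μ := by
  have hint : Integrable (fun x => 1 / e x * F x) μ := by
    refine hF.bdd_mul (c := 1) (he.const_div 1).aestronglyMeasurable ?_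
    filter_upwards [hbound] with x hx
    rw [Real.norm_of_nonneg (by linarith [one_div_pos.2 (zero_lt_one.trans_le hx.1)])]
    exact (div_le_one (zero_lt_one.trans_le hx.1)).2 hx.1
  rw [← integral_const_mul]
  refine integral_mono_ae (hF.const_mul _) hint ?_
  filter_upwards [hbound] with x hx
  rw [← one_div]
  exact mul_le_mul_of_nonneg_right (one_div_le_one_div_of_le (by linarith) hx.2) (hF0 x)

lemma integral_div_mul_le_inv_mul_integral {a b e : α → ℝ} {m : ℝ} (hm : 0 < m)
    (ha : ∀ x, 0 ≤ a x) (hb : ∀ x, 0 ≤ b x) (he : ∀ᵐ x ∂μ, m ≤ e x)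
    (hint : Integrable (fun x => a x * b x) μ) :
    ∫ x, a x / e x * b x ∂μ ≤ m⁻¹ * ∫ x, a x * b x ∂μ := by
  rw [← integral_const_mul]
  refine integral_mono_of_nonneg ?_ (hint.const_mul _) ?_
  · filter_upwards [he] with x hx
    have := ha x; have := hb x; have : 0 < e x := hm.trans_le hx
    positivity
  · filter_upwards [he] with x hx
    calc a x / e x * b x ≤ a x / m * b x :=
          mul_le_mul_of_nonneg_right (div_le_div_of_nonneg_left (ha x) hm hx) (hb x)
      _ = m⁻¹ * (a x * b x) := by ring

end MeasureTheory

section VariableExponent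

variable {N : ℕ} {p q r f g : RN N → ℝ} {lam : ℝ} {k : ℕ} {u : RN N → ℝ}

lemma modular_integrand_nonneg (p u : RN N → ℝ) (x : RN N) :
    0 ≤ ‖gradient u x‖ ^ p x + |u x| ^ p x :=
  add_nonneg (Real.rpow_nonneg (norm_nonneg _) _) (Real.rpow_nonneg (abs_nonneg _) _)

lemma rho1_nonneg (p u : RN N → ℝ) : 0 ≤ rho1 p u :=
  integral_nonneg (modular_integrand_nonneg p u)

lemma WluxNorm_le_max_one_rho1 (hp : ∀ᵐ x, 1 ≤ p x) (hu : memW p u) :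
    WluxNorm p u ≤ max 1 (rho1 p u) := by
  set t := max 1 (rho1 p u)
  have ht : 1 ≤ t := le_max_left _ _
  have htpos : 0 < t := zero_lt_one.trans_le ht
  refine csInf_le ⟨0, fun s hs => hs.1.le⟩ ⟨htpos, ?_⟩
  calc ∫ x, (‖gradient u x‖ ^ p x + |u x| ^ p x) / t ^ p x
      ≤ ∫ x, (‖gradient u x‖ ^ p x + |u x| ^ p x) / t := by
        refine integral_mono_of_nonneg ?_ (hu.2.div_const t) ?_
        · filter_upwards with x
          have := modular_integrand_nonneg p u x
          positivity
        · filter_upwards [hp] with x hx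
          exact div_le_div_of_nonneg_left (modular_integrand_nonneg p u x) htpos
            (Real.self_le_rpow_of_one_le ht hx)
    _ = rho1 p u / t := integral_div _ _
    _ ≤ 1 := (div_le_one htpos).2 (le_max_right _ _)

lemma dJlk_self (hp : ∀ᵐ x, p x ≠ 0) (hq : ∀ᵐ x, q x ≠ 0) (hr : ∀ᵐ x, r x ≠ 0) :
    dJlk p q r f g lam k u u = rho1 p u
      - lam * (∫ x, g ((k : ℝ)⁻¹ • x) * |u x| ^ q x)
      - ∫ x, f ((k : ℝ)⁻¹ • x) * |u x| ^ r x := by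
  unfold dJlk rho1
  congr 1; congr 1
  · refine integral_congr_ae ?_
    filter_upwards [hp] with x hx
    rw [real_inner_self_eq_norm_mul_norm, ← mul_assoc,
      Real.rpow_sub_two_mul_self_mul_self (norm_nonneg _) hx,
      Real.abs_rpow_sub_two_mul_self_mul_self _ hx]
  · refine congrArg _ (integral_congr_ae ?_)
    filter_upwards [hq] with x hx
    rw [mul_assoc _ _ (u x), mul_assoc, ← mul_assoc (|u x| ^ _),
      Real.abs_rpow_sub_two_mul_self_mul_self _ hx]
  · refine integral_congr_ae ?_
    filter_upwards [hr] with x hx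
    rw [mul_assoc _ _ (u x), mul_assoc, ← mul_assoc (|u x| ^ _),
      Real.abs_rpow_sub_two_mul_self_mul_self _ hx]

lemma mul_rho1_le_Jlk {pp qm : ℝ} (hpm : Measurable p) (hf0 : ∀ x, 0 ≤ f x)
    (hg0 : ∀ x, 0 ≤ g x) (hlam : 0 ≤ lam) (hp : ∀ᵐ x, 1 < p x ∧ p x ≤ pp) (hqm : 0 < qm)
    (hq : ∀ᵐ x, qm ≤ q x ∧ q x ≤ r x) (hu : nehari p q r f g lam k u)
    (hig : Integrable (fun x => g ((k : ℝ)⁻¹ • x) * |u x| ^ q x))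
    (hif : Integrable (fun x => f ((k : ℝ)⁻¹ • x) * |u x| ^ r x)) :
    (pp⁻¹ - qm⁻¹) * rho1 p u ≤ Jlk p q r f g lam k u := by
  have hq_ge : ∀ᵐ x, qm ≤ q x := hq.mono fun x hx => hx.1
  have hr_ge : ∀ᵐ x, qm ≤ r x := hq.mono fun x hx => hx.1.trans hx.2
  have hnehari : rho1 p u = lam * (∫ x, g ((k : ℝ)⁻¹ • x) * |u x| ^ q x)
      + ∫ x, f ((k : ℝ)⁻¹ • x) * |u x| ^ r x := by
    have h := hu.2.2
    rw [dJlk_self (hp.mono fun x hx => by linarith [hx.1])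
      (hq_ge.mono fun x hx => by linarith) (hr_ge.mono fun x hx => by linarith)] at h
    linarith
  have hP : pp⁻¹ * rho1 p u ≤ ∫ x, 1 / p x * (‖gradient u x‖ ^ p x + |u x| ^ p x) :=
    inv_mul_integral_le_integral_one_div_mul hpm.aemeasurable
    (hp.mono fun x hx => ⟨hx.1.le, hx.2⟩) hu.1.2 (modular_integrand_nonneg p u)
  have hG := integral_div_mul_le_inv_mul_integral hqm (fun x => hg0 _)
    (fun x => Real.rpow_nonneg (abs_nonneg (u x)) (q x)) hq_ge hig
  have hF := integral_div_mul_le_inv_mul_integral hqm (fun x => hf0 _)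
    (fun x => Real.rpow_nonneg (abs_nonneg (u x)) (r x)) hr_ge hif
  unfold Jlk
  linear_combination hP + lam * hG + hF - qm⁻¹ * hnehari

end VariableExponent

theorem minimizing_sequence_bounded_general {N : ℕ} (p q r f g : RN N → ℝ) (lam : ℝ) (k : ℕ)
    (pp qm : ℝ)
    (hpm : Measurable p)
    (hf0 : ∀ x, 0 ≤ f x) (hg0 : ∀ x, 0 ≤ g x)
    (hlam : 0 ≤ lam)
    (hp : ∀ᵐ x : RN N, 1 < p x ∧ p x ≤ pp) (hppqm : pp < qm) (hpp : 0 < pp)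
    (hq : ∀ᵐ x : RN N, qm ≤ q x ∧ q x ≤ r x)
    (u : ℕ → RN N → ℝ) (hu : ∀ n, nehari p q r f g lam k (u n))
    (hig : ∀ n, Integrable (fun x => g ((k : ℝ)⁻¹ • x) * |u n x| ^ q x) (volume : Measure (RN N)))
    (hif : ∀ n, Integrable (fun x => f ((k : ℝ)⁻¹ • x) * |u n x| ^ r x) (volume : Measure (RN N)))
    (hmin : Tendsto (fun n => Jlk p q r f g lam k (u n)) atTop (nhds (clk p q r f g lam k))) :
    ∃ C : ℝ, ∀ n, WluxNorm p (u n) ≤ C := by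
  obtain ⟨B, hB⟩ := hmin.bddAbove_range
  have hgap : 0 < pp⁻¹ - qm⁻¹ := sub_pos.2 (inv_strictAnti₀ hpp hppqm)
  refine ⟨max 1 (B / (pp⁻¹ - qm⁻¹)), fun n => ?_⟩
  have hrho : rho1 p (u n) ≤ B / (pp⁻¹ - qm⁻¹) := by
    rw [le_div_iff₀' hgap]
    exact (mul_rho1_le_Jlk hpm hf0 hg0 hlam hp (hpp.trans hppqm) hq (hu n) (hig n) (hif n)).trans
      (hB ⟨n, rfl⟩)
  exact (WluxNorm_le_max_one_rho1 (hp.mono fun x hx => hx.1.le) (hu n).1).trans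
    (max_le_max_left 1 hrho)

/-- minimizing sequences on the Nehari manifold are bounded in
`W^{1,p(x)}(ℝ^N)`. -/
theorem minimizing_sequence_bounded {N : ℕ} (p q r f g : RN N → ℝ) (lam : ℝ) (k : ℕ)
    (pp qm : ℝ)
    (hpm : Measurable p) (hqm : Measurable q) (hrm : Measurable r)
    (hfc : Continuous f) (hgc : Continuous g)
    (hf0 : ∀ x, 0 ≤ f x) (hf1 : ∀ x, f x ≤ 1) (hg0 : ∀ x, 0 ≤ g x)
    (hgb : ∃ Cg : ℝ, ∀ x, g x ≤ Cg) (hlam : 0 ≤ lam)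
    (hp : ∀ᵐ x : RN N, 1 < p x ∧ p x ≤ pp) (hppqm : pp < qm) (hpp : 0 < pp)
    (hq : ∀ᵐ x : RN N, qm ≤ q x ∧ q x ≤ r x)
    (u : ℕ → RN N → ℝ) (hu : ∀ n, nehari p q r f g lam k (u n))
    (hig : ∀ n, Integrable (fun x => g ((k : ℝ)⁻¹ • x) * |u n x| ^ q x) (volume : Measure (RN N)))
    (hif : ∀ n, Integrable (fun x => f ((k : ℝ)⁻¹ • x) * |u n x| ^ r x) (volume : Measure (RN N)))
    (hmin : Tendsto (fun n => Jlk p q r f g lam k (u n)) atTop (nhds (clk p q r f g lam k))) :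
    ∃ C : ℝ, ∀ n, WluxNorm p (u n) ≤ C :=
  minimizing_sequence_bounded_general p q r f g lam k pp qm hpm hf0 hg0 hlam hp hppqm hpp hq u hu
    hig hif hmin
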